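/- Let E : Q → Q' be a channel with Stinespring dilation V : Q → Q'⊗A and complementary channel Ẽ, and let s = {p(x), |ψ_x⟩}_{x∈X} be an ensemble of pure states on Q with average state ρ_s. Then the coherent information loss equals the entropy defect loss of the input ensemble plus the entropy defect of the induced ancillary ensemble: δ(ρ_s, E) = Δχ(s, E) + χ(Ẽ(s)). -/

import Mathlib

/-! Dilating the purification `Ψ` of `ρ_s` by `V` gives a pure state on `R ⊗ Q' ⊗ A`, so
`S((id ⊗ E)(Ψ)) = S(RQ') = S(A) = S(Ẽ(ρ_s))`; likewise `E(ψ_x)` and `Ẽ(ψ_x)` are the two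
marginals of the pure state `Vψ_x` and have equal entropy. Both facts come from `M Mᴴ` and `Mᴴ M`
having the same nonzero spectrum (`Matrix.charpoly_mul_comm'`). With `S(ψ_x) = 0` the identity
is then linear bookkeeping. -/

open Matrix
open scoped BigOperators ComplexOrder Classical

noncomputable section

namespace QID

variable {Q Q' R A X O B : Type*}

/-- The rank-one projector `|ψ⟩⟨ψ|`. -/
def pureState (ψ : Q → ℂ) : Matrix Q Q ℂ :=
  Matrix.vecMulVec ψ (star ψ)

/-- A density matrix: positive semidefinite with unit trace. -/
def IsDensity [Fintype Q] (ρ : Matrix Q Q ℂ) : Prop :=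
  ρ.PosSemidef ∧ ρ.trace = 1

/-- Square root of a positive semidefinite matrix (junk value `0` otherwise). -/
def sqrtPSD [Fintype Q] [DecidableEq Q] (M : Matrix Q Q ℂ) : Matrix Q Q ℂ :=
  if h : M.PosSemidef then
    (h.1.eigenvectorUnitary : Matrix Q Q ℂ) *
      Matrix.diagonal (((↑) : ℝ → ℂ) ∘ Real.sqrt ∘ h.1.eigenvalues) *
      (star h.1.eigenvectorUnitary : Matrix Q Q ℂ)
  else 0

/-- The trace norm `‖M‖₁ = Tr √(MᴴM)`. -/
def traceNorm [Fintype Q] [DecidableEq Q] (M : Matrix Q Q ℂ) : ℝ :=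
  (sqrtPSD (Mᴴ * M)).trace.re

/-- The fidelity `F(ρ,σ) = (Tr|√ρ√σ|)²`. -/
def fidelity [Fintype Q] [DecidableEq Q] (ρ σ : Matrix Q Q ℂ) : ℝ :=
  (traceNorm (sqrtPSD ρ * sqrtPSD σ)) ^ 2

/-- The von Neumann entropy `S(ρ) = -Tr[ρ log₂ ρ]` (base two), computed through
the eigenvalues of `ρ`; junk value `0` if `ρ` is not Hermitian. -/
def entropy [Fintype Q] [DecidableEq Q] (ρ : Matrix Q Q ℂ) : ℝ :=
  if h : ρ.IsHermitian then (∑ i, Real.negMulLog (h.eigenvalues i)) / Real.log 2 else 0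

/-- The entropy defect (Holevo quantity) `χ(s) = S(ρ_s) - ∑ₓ p(x) S(ρₓ)` of an ensemble. -/
def entropyDefect [Fintype Q] [DecidableEq Q] [Fintype X]
    (p : X → ℝ) (ρ : X → Matrix Q Q ℂ) : ℝ :=
  entropy (∑ x, (p x : ℂ) • ρ x) - ∑ x, p x * entropy (ρ x)

/-- The action of `id_R ⊗ Φ` on a bipartite matrix. -/
def idTensor (Φ : Matrix Q Q ℂ →ₗ[ℂ] Matrix Q' Q' ℂ)
    (M : Matrix (R × Q) (R × Q) ℂ) : Matrix (R × Q') (R × Q') ℂ :=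
  fun p q => Φ (Matrix.of fun a b => M (p.1, a) (q.1, b)) p.2 q.2

/-- Complete positivity: every ampliation `id_{Fin k} ⊗ Φ` preserves positive semidefiniteness. -/
def IsCompletelyPositive [Fintype Q] [Fintype Q']
    (Φ : Matrix Q Q ℂ →ₗ[ℂ] Matrix Q' Q' ℂ) : Prop :=
  ∀ (k : ℕ) (M : Matrix (Fin k × Q) (Fin k × Q) ℂ),
    M.PosSemidef → (idTensor Φ M).PosSemidef

def IsTracePreserving [Fintype Q] [Fintype Q']
    (Φ : Matrix Q Q ℂ →ₗ[ℂ] Matrix Q' Q' ℂ) : Prop :=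
  ∀ M : Matrix Q Q ℂ, (Φ M).trace = M.trace

/-- A channel: a completely positive trace-preserving linear map. -/
def IsChannel [Fintype Q] [Fintype Q']
    (Φ : Matrix Q Q ℂ →ₗ[ℂ] Matrix Q' Q' ℂ) : Prop :=
  IsCompletelyPositive Φ ∧ IsTracePreserving Φ

/-- A quantum instrument: a family of completely positive maps summing up to a
trace-preserving map. -/
def IsInstrument [Fintype Q] [Fintype Q'] [Fintype O]
    (E : O → (Matrix Q Q ℂ →ₗ[ℂ] Matrix Q' Q' ℂ)) : Prop :=
  (∀ m, IsCompletelyPositive (E m)) ∧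
    ∀ M : Matrix Q Q ℂ, (∑ m, E m M).trace = M.trace

/-- Partial trace over the first tensor factor. -/
def ptraceL [Fintype R] (M : Matrix (R × Q) (R × Q) ℂ) : Matrix Q Q ℂ :=
  fun a b => ∑ i, M (i, a) (i, b)

/-- Partial trace over the second tensor factor. -/
def ptraceRt [Fintype Q] (M : Matrix (R × Q) (R × Q) ℂ) : Matrix R R ℂ :=
  fun i j => ∑ a, M (i, a) (j, a)

/-- `Ψ` (a vector on `R × Q`, reference first) purifies the state `ρ` on `Q`. -/
def IsPurification [Fintype R] (ρ : Matrix Q Q ℂ) (Ψ : R × Q → ℂ) : Prop :=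
  ptraceL (pureState Ψ) = ρ

/-- The channelized instrument `ρ ↦ ∑ₘ Eₘ(ρ) ⊗ |m⟩⟨m|`, acting `Q → Q' ⊗ 𝒳`. -/
def instrApply [DecidableEq O] (E : O → (Matrix Q Q ℂ →ₗ[ℂ] Matrix Q' Q' ℂ))
    (ρ : Matrix Q Q ℂ) : Matrix (Q' × O) (Q' × O) ℂ :=
  fun p q => if p.2 = q.2 then E p.2 ρ p.1 q.1 else 0

/-- The action of `id_R ⊗ M` for the channelized instrument `M` on a bipartite matrix. -/
def instrApplyRef [DecidableEq O] (E : O → (Matrix Q Q ℂ →ₗ[ℂ] Matrix Q' Q' ℂ))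
    (M : Matrix (R × Q) (R × Q) ℂ) : Matrix (R × Q' × O) (R × Q' × O) ℂ :=
  fun p q => if p.2.2 = q.2.2 then
    E p.2.2 (Matrix.of fun a b => M (p.1, a) (q.1, b)) p.2.1 q.2.1 else 0

/-- The coherent information `I_c^{R→B}(ρ^{RB}) = S(ρ^B) - S(ρ^{RB})`. -/
def cohInfo [Fintype R] [DecidableEq R] [Fintype B] [DecidableEq B]
    (M : Matrix (R × B) (R × B) ℂ) : ℝ :=
  entropy (ptraceL M) - entropy M

/-- The quantum disturbance `δ(ρ,M) = S(ρ) - I_c^{R→Q'𝒳}((id_R ⊗ M)(Ψ))` of an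
instrument, w.r.t. a purification `Ψ` of `ρ`. -/
def qDisturbance [Fintype Q] [DecidableEq Q] [Fintype Q'] [DecidableEq Q']
    [Fintype R] [DecidableEq R] [Fintype O] [DecidableEq O]
    (ρ : Matrix Q Q ℂ) (E : O → (Matrix Q Q ℂ →ₗ[ℂ] Matrix Q' Q' ℂ))
    (Ψ : R × Q → ℂ) : ℝ :=
  entropy ρ - cohInfo (instrApplyRef E (pureState Ψ))

/-- The quantum disturbance (coherent information loss)
`δ(ρ,E) = S(ρ) - I_c^{R→Q'}((id_R ⊗ E)(Ψ))` of a channel. -/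
def qDisturbanceChan [Fintype Q] [DecidableEq Q] [Fintype Q'] [DecidableEq Q']
    [Fintype R] [DecidableEq R]
    (ρ : Matrix Q Q ℂ) (E : Matrix Q Q ℂ →ₗ[ℂ] Matrix Q' Q' ℂ)
    (Ψ : R × Q → ℂ) : ℝ :=
  entropy ρ - cohInfo (idTensor E (pureState Ψ))

/-- The quantum information gain `ι(ρ,M) = S(ρ^R) - ∑ₘ p(m) S(τ^R_m)`. -/
def qInfoGain [Fintype Q] [DecidableEq Q] [Fintype Q'] [DecidableEq Q']
    [Fintype R] [DecidableEq R] [Fintype O]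
    (E : O → (Matrix Q Q ℂ →ₗ[ℂ] Matrix Q' Q' ℂ)) (Ψ : R × Q → ℂ) : ℝ :=
  entropy (ptraceRt (pureState Ψ)) -
    ∑ m, ((E m (ptraceL (pureState Ψ))).trace.re) *
      entropy ((((E m (ptraceL (pureState Ψ))).trace.re)⁻¹ : ℝ) •
        ptraceRt (idTensor (E m) (pureState Ψ)))

/-- The corrected average output fidelity of an instrument on an ensemble:
`F_av(s,M) = sup over families of correcting channels {R_m} of
∑ₓ p(x) F(∑ₘ R_m(E_m(ρₓ)), ρₓ)`. -/
def avgFid [Fintype Q] [DecidableEq Q] [Fintype Q'] [Fintype X] [Fintype O]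
    (p : X → ℝ) (ρ : X → Matrix Q Q ℂ)
    (E : O → (Matrix Q Q ℂ →ₗ[ℂ] Matrix Q' Q' ℂ)) : ℝ :=
  ⨆ Rf : {Rf : O → (Matrix Q' Q' ℂ →ₗ[ℂ] Matrix Q Q ℂ) // ∀ m, IsChannel (Rf m)},
    ∑ x, p x * fidelity (∑ m, Rf.1 m (E m (ρ x))) (ρ x)

/-- The corrected average output fidelity of a channel on an ensemble:
`F_av(s,E) = sup over correcting channels R of ∑ₓ p(x) F(R(E(ρₓ)), ρₓ)`. -/
def avgFidChan [Fintype Q] [DecidableEq Q] [Fintype Q'] [Fintype X]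
    (p : X → ℝ) (ρ : X → Matrix Q Q ℂ)
    (E : Matrix Q Q ℂ →ₗ[ℂ] Matrix Q' Q' ℂ) : ℝ :=
  ⨆ Rc : {Rc : Matrix Q' Q' ℂ →ₗ[ℂ] Matrix Q Q ℂ // IsChannel Rc},
    ∑ x, p x * fidelity (Rc.1 (E (ρ x))) (ρ x)

/-- The corrected entanglement fidelity of an instrument w.r.t. a purification `Ψ`:
`F_e(ρ,M) = sup over families of correcting channels {R_m} of
F(∑ₘ (id_R ⊗ R_m ∘ E_m)(Ψ), Ψ)`. -/
def entFid [Fintype Q] [DecidableEq Q] [Fintype Q'] [Fintype R] [DecidableEq R] [Fintype O]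
    (Ψ : R × Q → ℂ) (E : O → (Matrix Q Q ℂ →ₗ[ℂ] Matrix Q' Q' ℂ)) : ℝ :=
  ⨆ Rf : {Rf : O → (Matrix Q' Q' ℂ →ₗ[ℂ] Matrix Q Q ℂ) // ∀ m, IsChannel (Rf m)},
    fidelity (∑ m, idTensor (Rf.1 m ∘ₗ E m) (pureState Ψ)) (pureState Ψ)

/-- A POVM: positive operators summing to the identity. -/
def IsPOVM [Fintype Q] [DecidableEq Q] [Fintype O] (P : O → Matrix Q Q ℂ) : Prop :=
  (∀ m, (P m).PosSemidef) ∧ ∑ m, P m = 1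

/-- The classical mutual information `I(X:O)` of the joint distribution
`p(x,m) = p(x) Tr[ρₓ P_m]` generated by measuring the ensemble with the POVM `P`. -/
def povmMutualInfo [Fintype Q] [Fintype X] [Fintype O]
    (p : X → ℝ) (ρ : X → Matrix Q Q ℂ) (P : O → Matrix Q Q ℂ) : ℝ :=
  ∑ x, ∑ m, p x * (ρ x * P m).trace.re *
    Real.logb 2 ((ρ x * P m).trace.re / (∑ x', p x' * (ρ x' * P m).trace.re))

/-- The accessible information: supremum of the mutual information over all POVMs. -/
def accInfo [Fintype Q] [DecidableEq Q] [Fintype X]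
    (p : X → ℝ) (ρ : X → Matrix Q Q ℂ) : ℝ :=
  ⨆ k : ℕ, ⨆ P : {P : Fin k → Matrix Q Q ℂ // IsPOVM P}, povmMutualInfo p ρ P.1

/-- The minimum overlap `min_{1 ≤ i ≤ N-1} |⟨ψ_{x_i}|ψ_{x_{i+1}}⟩|` along a path
`x : Fin N → X` of signals. -/
def pathMin [Fintype Q] (ψ : X → Q → ℂ) {N : ℕ} (x : Fin N → X) : ℝ :=
  ⨅ i : Fin (N - 1),
    ‖(star (ψ (x (Fin.castLE (Nat.sub_le N 1) i))) ⬝ᵥ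
      ψ (x ⟨i.1 + 1, by have := i.isLt; omega⟩))‖

/-- `η(s)`: the supremum over all complete (surjective) paths of the minimum
consecutive overlap divided by the length of the path. -/
def eta [Fintype Q] (ψ : X → Q → ℂ) : ℝ :=
  ⨆ N : ℕ, ⨆ x : {x : Fin N → X // Function.Surjective x}, pathMin ψ x.1 / N

/-- `ζ(s) = η(s) · minₓ p(x)`; the ensemble is irreducible iff `ζ(s) > 0`. -/
def zeta [Fintype Q] [Fintype X] (p : X → ℝ) (ψ : X → Q → ℂ) : ℝ :=
  eta ψ * ⨅ x, p x

/-- `Tr_R[(φ ⊗ 1_Q)|Ψ⟩⟨Ψ|]` for an operator `φ` on the reference system. -/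
def refOp [Fintype R] (φ : Matrix R R ℂ) (Ψ : R × Q → ℂ) : Matrix Q Q ℂ :=
  fun a b => ∑ i, ∑ k, φ i k * Ψ (k, a) * star (Ψ (i, b))

lemma entropy_eq_sum_roots_charpoly [Fintype Q] [DecidableEq Q] {ρ : Matrix Q Q ℂ}
    (hρ : ρ.IsHermitian) :
    entropy ρ = (ρ.charpoly.roots.map fun z => Real.negMulLog z.re).sum / Real.log 2 := by
  rw [entropy, dif_pos hρ, hρ.roots_charpoly_eq_eigenvalues, Multiset.map_map]
  rfl

open Polynomial in
lemma entropy_eq_of_X_pow_mul_charpoly_eq [Fintype Q] [DecidableEq Q] [Fintype R]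
    [DecidableEq R] {ρ : Matrix Q Q ℂ} {σ : Matrix R R ℂ}
    (hρ : ρ.IsHermitian) (hσ : σ.IsHermitian)
    (h : Polynomial.X ^ Fintype.card R * ρ.charpoly =
      Polynomial.X ^ Fintype.card Q * σ.charpoly) :
    entropy ρ = entropy σ := by
  have hroots := congrArg roots h
  rw [roots_mul ((monic_X_pow _).mul ρ.charpoly_monic).ne_zero,
    roots_mul ((monic_X_pow _).mul σ.charpoly_monic).ne_zero, roots_X_pow, roots_X_pow] at hroots
  have hsum := congrArg (fun s => (s.map fun z : ℂ => Real.negMulLog z.re).sum) hroots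
  simp only [Multiset.map_add, Multiset.sum_add, Multiset.map_nsmul, Multiset.sum_nsmul,
    Multiset.map_singleton, Multiset.sum_singleton, Complex.zero_re, Real.negMulLog_zero,
    smul_zero, zero_add] at hsum
  rw [entropy_eq_sum_roots_charpoly hρ, entropy_eq_sum_roots_charpoly hσ, hsum]

lemma entropy_mul_conjTranspose_comm [Fintype Q] [DecidableEq Q] [Fintype R] [DecidableEq R]
    (M : Matrix Q R ℂ) : entropy (M * Mᴴ) = entropy (Mᴴ * M) :=
  entropy_eq_of_X_pow_mul_charpoly_eq (isHermitian_mul_conjTranspose_self M)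
    (isHermitian_conjTranspose_mul_self M) (charpoly_mul_comm' M Mᴴ)

lemma entropy_transpose [Fintype Q] [DecidableEq Q] {ρ : Matrix Q Q ℂ} (hρ : ρ.IsHermitian) :
    entropy ρᵀ = entropy ρ := by
  rw [entropy_eq_sum_roots_charpoly hρ.transpose, charpoly_transpose,
    entropy_eq_sum_roots_charpoly hρ]

lemma entropy_one [Fintype Q] [DecidableEq Q] : entropy (1 : Matrix Q Q ℂ) = 0 := by
  rw [entropy_eq_sum_roots_charpoly isHermitian_one, charpoly_one, ← Polynomial.C_1,
    Polynomial.roots_pow, Polynomial.roots_X_sub_C]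
  simp [Multiset.map_nsmul, Multiset.sum_nsmul]

lemma ptraceRt_pureState [Fintype Q] (φ : R × Q → ℂ) :
    ptraceRt (pureState φ) = of (Function.curry φ) * (of (Function.curry φ))ᴴ := by
  ext i j
  simp [ptraceRt, pureState, vecMulVec_apply, mul_apply]

lemma ptraceL_pureState [Fintype R] (φ : R × Q → ℂ) :
    ptraceL (pureState φ) = ((of (Function.curry φ))ᴴ * of (Function.curry φ))ᵀ := by
  ext a b
  simp [ptraceL, pureState, vecMulVec_apply, mul_apply, mul_comm]

lemma entropy_ptraceRt_pureState [Fintype Q] [DecidableEq Q] [Fintype R] [DecidableEq R]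
    (φ : R × Q → ℂ) : entropy (ptraceRt (pureState φ)) = entropy (ptraceL (pureState φ)) := by
  rw [ptraceRt_pureState, ptraceL_pureState,
    entropy_transpose (isHermitian_conjTranspose_mul_self _), entropy_mul_conjTranspose_comm]

lemma entropy_pureState [Fintype Q] [DecidableEq Q] {ψ : Q → ℂ} (hψ : star ψ ⬝ᵥ ψ = 1) :
    entropy (pureState ψ) = 0 := by
  have hψ' : (replicateCol Unit ψ)ᴴ * replicateCol Unit ψ = 1 := by
    ext
    simp [hψ]
  rw [pureState, vecMulVec_eq Unit, ← conjTranspose_replicateCol, entropy_mul_conjTranspose_comm,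
    hψ', entropy_one]

lemma mul_pureState_mul_conjTranspose [Fintype Q] (V : Matrix R Q ℂ) (ψ : Q → ℂ) :
    V * pureState ψ * Vᴴ = pureState (V *ᵥ ψ) := by
  rw [pureState, pureState, mul_vecMulVec, vecMulVec_mul, star_mulVec]

lemma ptraceL_idTensor [Fintype R] (Φ : Matrix Q Q ℂ →ₗ[ℂ] Matrix Q' Q' ℂ)
    (M : Matrix (R × Q) (R × Q) ℂ) : ptraceL (idTensor Φ M) = Φ (ptraceL M) := by
  have hM : ptraceL M = ∑ r, of fun a b => M (r, a) (r, b) := by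
    ext a b
    simp [ptraceL, Matrix.sum_apply]
  ext a b
  simp [hM, ptraceL, idTensor, Matrix.sum_apply]

lemma entropyDefect_map [Fintype Q] [Fintype Q'] [DecidableEq Q'] [Fintype X]
    (Φ : Matrix Q Q ℂ →ₗ[ℂ] Matrix Q' Q' ℂ) (p : X → ℝ) (ρ : X → Matrix Q Q ℂ) :
    entropyDefect p (fun x => Φ (ρ x)) =
      entropy (Φ (∑ x, (p x : ℂ) • ρ x)) - ∑ x, p x * entropy (Φ (ρ x)) := by
  simp [entropyDefect, map_sum]

section Stinespring

variable (V : Matrix (Q' × A) Q ℂ)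

def complementaryChannel [Fintype Q] [Fintype Q'] : Matrix Q Q ℂ →ₗ[ℂ] Matrix A A ℂ where
  toFun M := ptraceL (V * M * Vᴴ)
  map_add' M N := by
    ext
    simp [ptraceL, Matrix.mul_add, Matrix.add_mul, Finset.sum_add_distrib]
  map_smul' c M := by
    ext
    simp [ptraceL, Finset.mul_sum]

lemma complementaryChannel_apply [Fintype Q] [Fintype Q'] (M : Matrix Q Q ℂ) :
    complementaryChannel V M = ptraceL (V * M * Vᴴ) := rfl

/-- The vector `(1_R ⊗ V) Ψ`, with the tensor factors regrouped as `(R × Q') × A`. -/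
def idTensorVec [Fintype Q] (Ψ : R × Q → ℂ) : (R × Q') × A → ℂ :=
  fun x => (V *ᵥ fun q => Ψ (x.1.1, q)) (x.1.2, x.2)

lemma idTensor_pureState_eq_ptraceRt [Fintype Q] [Fintype A]
    {E : Matrix Q Q ℂ →ₗ[ℂ] Matrix Q' Q' ℂ}
    (hE : ∀ M : Matrix Q Q ℂ, E M = ptraceRt (V * M * Vᴴ)) (Ψ : R × Q → ℂ) :
    idTensor E (pureState Ψ) = ptraceRt (pureState (idTensorVec V Ψ)) := by
  ext x y
  simp only [idTensor, hE, ptraceRt, pureState, idTensorVec, vecMulVec_apply, mul_apply, mulVec,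
    dotProduct, of_apply, conjTranspose_apply, Pi.star_apply, RCLike.star_def, star_sum, star_mul',
    Finset.mul_sum, Finset.sum_mul]
  exact Finset.sum_congr rfl fun _ _ => Finset.sum_congr rfl fun _ _ =>
    Finset.sum_congr rfl fun _ _ => by ring

lemma ptraceL_pureState_idTensorVec [Fintype Q] [Fintype Q'] [Fintype R] (Ψ : R × Q → ℂ) :
    ptraceL (pureState (idTensorVec V Ψ)) = complementaryChannel V (ptraceL (pureState Ψ)) := by
  ext a a'
  simp only [complementaryChannel_apply, ptraceL, pureState, idTensorVec, vecMulVec_apply,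
    mul_apply, mulVec, dotProduct, conjTranspose_apply, Pi.star_apply, RCLike.star_def, star_sum,
    star_mul', Finset.mul_sum, Finset.sum_mul, Fintype.sum_prod_type]
  rw [Finset.sum_comm]
  refine Finset.sum_congr rfl fun b _ => ?_
  rw [Finset.sum_comm]
  refine Finset.sum_congr rfl fun j _ => ?_
  rw [Finset.sum_comm]
  exact Finset.sum_congr rfl fun _ _ => Finset.sum_congr rfl fun _ _ => by ring

variable [Fintype Q] [DecidableEq Q'] [Fintype Q'] [Fintype A] [DecidableEq A]
  {E : Matrix Q Q ℂ →ₗ[ℂ] Matrix Q' Q' ℂ} (hE : ∀ M : Matrix Q Q ℂ, E M = ptraceRt (V * M * Vᴴ))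
include hE

lemma entropy_apply_pureState_eq_complementaryChannel (ψ : Q → ℂ) :
    entropy (E (pureState ψ)) = entropy (complementaryChannel V (pureState ψ)) := by
  rw [hE, complementaryChannel_apply, mul_pureState_mul_conjTranspose, entropy_ptraceRt_pureState]

lemma entropy_idTensor_pureState_eq_complementaryChannel [Fintype R] [DecidableEq R]
    (Ψ : R × Q → ℂ) :
    entropy (idTensor E (pureState Ψ)) =
      entropy (complementaryChannel V (ptraceL (pureState Ψ))) := by
  rw [idTensor_pureState_eq_ptraceRt V hE, entropy_ptraceRt_pureState,
    ptraceL_pureState_idTensorVec]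

end Stinespring

theorem qDisturbanceChan_eq_defectLoss_add_ancilla_general
    {Q Q' A X R : Type*} [Fintype Q] [DecidableEq Q] [Fintype Q'] [DecidableEq Q']
    [Fintype A] [DecidableEq A] [Fintype X] [Fintype R] [DecidableEq R]
    (V : Matrix (Q' × A) Q ℂ)
    (E : Matrix Q Q ℂ →ₗ[ℂ] Matrix Q' Q' ℂ)
    (hE : ∀ M : Matrix Q Q ℂ, E M = ptraceRt (V * M * Vᴴ))
    (p : X → ℝ) (ψ : X → Q → ℂ)
    (hψ : ∀ x, star (ψ x) ⬝ᵥ ψ x = 1)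
    (ρs : Matrix Q Q ℂ) (hρs : ρs = ∑ x, (p x : ℂ) • pureState (ψ x))
    (Ψ : R × Q → ℂ) (hΨ : IsPurification ρs Ψ) :
    qDisturbanceChan ρs E Ψ =
      (entropyDefect p (fun x => pureState (ψ x)) -
        entropyDefect p (fun x => E (pureState (ψ x)))) +
      entropyDefect p (fun x => ptraceL (V * pureState (ψ x) * Vᴴ)) := by
  have hχ : entropyDefect p (fun x => pureState (ψ x)) = entropy ρs := by
    simp [entropyDefect, entropy_pureState (hψ _), hρs]
  have hB : ptraceL (idTensor E (pureState Ψ)) = E ρs := by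
    rw [ptraceL_idTensor, hΨ]
  have hRB : entropy (idTensor E (pureState Ψ)) = entropy (complementaryChannel V ρs) := by
    rw [entropy_idTensor_pureState_eq_complementaryChannel V hE, hΨ]
  simp_rw [← complementaryChannel_apply V, hχ, entropyDefect_map, ← hρs,
    entropy_apply_pureState_eq_complementaryChannel V hE]
  rw [qDisturbanceChan, cohInfo, hB, hRB]
  ring

/-- For a channel `E` with Stinespring dilation `V : Q → Q' ⊗ A`
and complementary channel `Ẽ`, and a pure-state ensemble `s`, the coherent
information loss equals the entropy defect loss of the input ensemble plus the
entropy defect of the induced ancillary ensemble: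
`δ(ρ_s, E) = Δχ(s, E) + χ(Ẽ(s))`. -/
theorem qDisturbanceChan_eq_defectLoss_add_ancilla
    {Q Q' A X R : Type*} [Fintype Q] [DecidableEq Q] [Fintype Q'] [DecidableEq Q']
    [Fintype A] [DecidableEq A] [Fintype X] [Fintype R] [DecidableEq R]
    (V : Matrix (Q' × A) Q ℂ) (hV : Vᴴ * V = 1)
    (E : Matrix Q Q ℂ →ₗ[ℂ] Matrix Q' Q' ℂ)
    (hE : ∀ M : Matrix Q Q ℂ, E M = ptraceRt (V * M * Vᴴ))
    (p : X → ℝ) (ψ : X → Q → ℂ)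
    (hp : ∀ x, 0 < p x) (hp1 : (∑ x, p x) = 1)
    (hψ : ∀ x, star (ψ x) ⬝ᵥ ψ x = 1)
    (ρs : Matrix Q Q ℂ) (hρs : ρs = ∑ x, (p x : ℂ) • pureState (ψ x))
    (Ψ : R × Q → ℂ) (hΨ : IsPurification ρs Ψ) :
    qDisturbanceChan ρs E Ψ =
      (entropyDefect p (fun x => pureState (ψ x)) -
        entropyDefect p (fun x => E (pureState (ψ x)))) +
      entropyDefect p (fun x => ptraceL (V * pureState (ψ x) * Vᴴ)) :=
  qDisturbanceChan_eq_defectLoss_add_ancilla_general V E hE p ψ hψ ρs hρs Ψ hΨ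

end QID
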